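/- arXiv:1804.01214 — 4 statements merged into one kernel-verified Lean document; each statement's English description precedes it below -/
import Mathlib

section
/- For a factorization ρ of transpositions in S_n with m factors and any element β of the braid group B_m acting on factorizations by the Hurwitz action, the mind-body dual satisfies (ρ·β)* = ρ*·β*, where β* is the image of β under the automorphism of B_m sending each standard generator σ_i to σ_i^{-1}. -/
open Equiv

/-- The braid relations on `k` generators `σ_1, ..., σ_k` (indexed by `Fin k`, with
generator `i` standing for `σ_{i+1}`): commutation relations for distant generators and
the braid relations for adjacent ones. -/
def braidRels (k : ℕ) : Set (FreeGroup (Fin k)) :=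
  {r | (∃ i j : Fin k, (i : ℕ) + 1 < (j : ℕ) ∧
          r = FreeGroup.of i * FreeGroup.of j * (FreeGroup.of i)⁻¹ * (FreeGroup.of j)⁻¹) ∨
       (∃ i j : Fin k, (i : ℕ) + 1 = (j : ℕ) ∧
          r = FreeGroup.of i * FreeGroup.of j * FreeGroup.of i *
              (FreeGroup.of j * FreeGroup.of i * FreeGroup.of j)⁻¹)}

/-- The braid group on `m` strands, presented with `m - 1` generators. -/
abbrev BraidGroup (m : ℕ) := PresentedGroup (braidRels (m - 1))

/-- The standard generator `σ_{i+1}` of the braid group `B_m` (0-indexed `i : Fin (m-1)`). -/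
def braidGen {m : ℕ} (i : Fin (m - 1)) : BraidGroup m := PresentedGroup.of i

/-- The generator `σ_{k+1}` of `B_m` as a total function of `k : ℕ` (equal to `1` out of range). -/
def braidGen' (m k : ℕ) : BraidGroup m :=
  if h : k < m - 1 then PresentedGroup.of ⟨k, h⟩ else 1

/-- `δ_{i,j} = σ_{j-1} σ_{j-2} ⋯ σ_i` (1-based indices). -/
def braidDelta (m i j : ℕ) : BraidGroup m :=
  ((List.range (j - i)).map fun t => braidGen' m (j - 2 - t)).prod

/-- `Δ_{i,j} = δ_{i,j} δ_{i+1,j} ⋯ δ_{j-1,j}` (1-based indices). -/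
def braidDeltaGar (m i j : ℕ) : BraidGroup m :=
  ((List.range (j - i)).map fun t => braidDelta m (i + t) j).prod

/-- The Garside element `Δ_m = Δ_{1,m}` of `B_m`. -/
def garside (m : ℕ) : BraidGroup m := braidDeltaGar m 1 m

/-- `λ_{i,j} = σ_i σ_{i+1} ⋯ σ_{j-1}` (1-based indices). -/
def braidLambda (m i j : ℕ) : BraidGroup m :=
  ((List.range (j - i)).map fun t => braidGen' m (i - 1 + t)).prod

/-- The Hurwitz move of the generator `σ_{i+1}` on a sequence of `m` permutations:
it replaces the pair `(τ_i, τ_{i+1})` by `(τ_i τ_{i+1} τ_i⁻¹, τ_i)`. -/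
def hurwitzMove {n m : ℕ} (i : Fin (m - 1)) (ρ : Fin m → Perm (Fin n)) :
    Fin m → Perm (Fin n) := fun j =>
  if (j : ℕ) = (i : ℕ) then
    ρ j * ρ ⟨(i : ℕ) + 1, by have := i.isLt; omega⟩ * (ρ j)⁻¹
  else if (j : ℕ) = (i : ℕ) + 1 then ρ ⟨(i : ℕ), by have := i.isLt; omega⟩
  else ρ j

/-- The mind-body dual of a factorization `ρ = (τ_1, ..., τ_m)` (indexed by `Fin m`):
its `i`-th entry is `τ_i^{τ_{i-1} ⋯ τ_1}`. -/
def mbDualF {n m : ℕ} (ρ : Fin m → Perm (Fin n)) : Fin m → Perm (Fin n) :=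
  fun i => (((List.ofFn ρ).take (i : ℕ)).reverse.prod)⁻¹ * ρ i *
    ((List.ofFn ρ).take (i : ℕ)).reverse.prod


/- ### Auxiliary lemmas -/


/-- Prefix product `τ_k ⋯ τ_1` of a factorization. -/
def pref {n m : ℕ} (ρ : Fin m → Perm (Fin n)) (k : ℕ) : Perm (Fin n) :=
  ((List.ofFn ρ).take k).reverse.prod

lemma pref_zero {n m : ℕ} (ρ : Fin m → Perm (Fin n)) : pref ρ 0 = 1 := rfl

lemma pref_succ {n m : ℕ} (ρ : Fin m → Perm (Fin n)) (k : ℕ) (h : k < m) :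
    pref ρ (k+1) = ρ ⟨k, h⟩ * pref ρ k := by
  unfold pref
  rw [List.take_succ]
  simp [h]

lemma pref_stop {n m : ℕ} (ρ : Fin m → Perm (Fin n)) (k : ℕ) (h : m ≤ k) :
    pref ρ (k+1) = pref ρ k := by
  unfold pref
  rw [List.take_of_length_le (by simp; omega), List.take_of_length_le (by simpa using h)]

lemma mbDualF_eq {n m : ℕ} (ρ : Fin m → Perm (Fin n)) (j : Fin m) :
    mbDualF ρ j = (pref ρ (j : ℕ))⁻¹ * ρ j * pref ρ (j : ℕ) := rfl

/-- The inverse Hurwitz move. -/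
def invMove {n m : ℕ} (i : Fin (m - 1)) (ρ : Fin m → Perm (Fin n)) :
    Fin m → Perm (Fin n) := fun j =>
  if (j : ℕ) = (i : ℕ) then ρ ⟨(i : ℕ) + 1, by have := i.isLt; omega⟩
  else if (j : ℕ) = (i : ℕ) + 1 then (ρ j)⁻¹ * ρ ⟨(i : ℕ), by have := i.isLt; omega⟩ * ρ j
  else ρ j

lemma hurwitz_invMove {n m : ℕ} (i : Fin (m - 1)) (ρ : Fin m → Perm (Fin n)) :
    hurwitzMove i (invMove i ρ) = ρ := by
  have him : (i : ℕ) + 1 < m := by have := i.isLt; omega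
  funext j
  obtain ⟨jv, hjv⟩ := j
  unfold hurwitzMove invMove
  by_cases h1 : jv = (i : ℕ)
  · subst h1
    simp [him, mul_assoc]
  · by_cases h2 : jv = (i : ℕ) + 1
    · subst h2
      simp
    · simp [h1, h2]

lemma isSwap_conj {n : ℕ} {τ : Perm (Fin n)} (σ : Perm (Fin n)) (h : τ.IsSwap) :
    (σ * τ * σ⁻¹).IsSwap := by
  obtain ⟨x, y, hxy, rfl⟩ := h
  exact ⟨σ x, σ y, σ.injective.ne hxy, (swap_apply_apply σ x y).symm⟩

/-- The key computation: mind-body dual intertwines the Hurwitz move with its inverse. -/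
lemma mbDual_move {n m : ℕ} (i : Fin (m - 1)) (ρ : Fin m → Perm (Fin n))
    (hρ : ∀ j, ρ j * ρ j = 1) :
    mbDualF (hurwitzMove i ρ) = invMove i (mbDualF ρ) := by
  have him : (i : ℕ) + 1 < m := by have := i.isLt; omega
  have hi : (i : ℕ) < m := by omega
  have hinv : ∀ j, (ρ j)⁻¹ = ρ j := fun j => inv_eq_of_mul_eq_one_left (hρ j)
  have hcan : ∀ (j : Fin m) (x : Perm (Fin n)), ρ j * (ρ j * x) = x := by
    intro j x; rw [← mul_assoc, hρ, one_mul]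
  set ρ' := hurwitzMove i ρ with hρ'def
  have hval : ∀ (k : ℕ) (hk : k < m), k ≠ (i : ℕ) → k ≠ (i : ℕ) + 1 →
      ρ' ⟨k, hk⟩ = ρ ⟨k, hk⟩ := by
    intro k hk h1 h2
    simp [hρ'def, hurwitzMove, h1, h2]
  have hvi : ρ' ⟨(i : ℕ), hi⟩ = ρ ⟨(i : ℕ), hi⟩ * ρ ⟨(i : ℕ) + 1, him⟩ * ρ ⟨(i : ℕ), hi⟩ := by
    simp [hρ'def, hurwitzMove, hinv]
  have hvi1 : ρ' ⟨(i : ℕ) + 1, him⟩ = ρ ⟨(i : ℕ), hi⟩ := by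
    simp [hρ'def, hurwitzMove]
  -- prefix products agree below i
  have h0 : ∀ k, k ≤ (i : ℕ) → pref ρ' k = pref ρ k := by
    intro k
    induction k with
    | zero => intro _; rfl
    | succ k ih =>
      intro h
      have hk : k < m := by omega
      rw [pref_succ _ _ hk, pref_succ _ _ hk, ih (by omega),
        hval k hk (by omega) (by omega)]
  have h1 : pref ρ' ((i : ℕ) + 1) =
      ρ ⟨(i : ℕ), hi⟩ * ρ ⟨(i : ℕ) + 1, him⟩ * ρ ⟨(i : ℕ), hi⟩ * pref ρ (i : ℕ) := by
    rw [pref_succ _ _ hi, h0 _ le_rfl, hvi]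
  -- prefix products agree at and beyond i+2
  have h2 : ∀ k, (i : ℕ) + 2 ≤ k → pref ρ' k = pref ρ k := by
    intro k
    induction k with
    | zero => omega
    | succ k ih =>
      intro h
      by_cases hk : k = (i : ℕ) + 1
      · subst hk
        rw [pref_succ _ _ him, pref_succ _ _ him, h1, hvi1, pref_succ ρ _ hi]
        simp only [mul_assoc, hcan]
      · have hk2 : (i : ℕ) + 2 ≤ k := by omega
        by_cases hkm : k < m
        · rw [pref_succ _ _ hkm, pref_succ _ _ hkm, ih hk2,
            hval k hkm (by omega) (by omega)]
        · rw [pref_stop _ _ (by omega), pref_stop _ _ (by omega), ih hk2]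
  have hp : ∀ k, k ≠ (i : ℕ) + 1 → pref ρ' k = pref ρ k := by
    intro k hk
    rcases le_or_gt k (i : ℕ) with h | h
    · exact h0 k h
    · exact h2 k (by omega)
  funext j
  rw [mbDualF_eq]
  unfold invMove
  by_cases hj1 : (j : ℕ) = (i : ℕ)
  · rw [if_pos hj1]
    have hj : j = ⟨(i : ℕ), hi⟩ := Fin.ext hj1
    subst hj
    rw [hp _ (by omega), hvi, mbDualF_eq]
    simp only [pref_succ ρ (i : ℕ) hi, mul_inv_rev, hinv, mul_assoc]
  · rw [if_neg hj1]
    by_cases hj2 : (j : ℕ) = (i : ℕ) + 1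
    · rw [if_pos hj2]
      have hj : j = ⟨(i : ℕ) + 1, him⟩ := Fin.ext hj2
      subst hj
      rw [h1, hvi1, mbDualF_eq, mbDualF_eq]
      simp only [pref_succ ρ (i : ℕ) hi, mul_inv_rev, hinv, mul_assoc, hcan,
        inv_mul_cancel_left, mul_inv_cancel_left]
    · rw [if_neg hj2, mbDualF_eq, hp _ hj2]
      congr 1
      congr 1
      exact hval (j : ℕ) j.isLt hj1 hj2

/-- For any right Hurwitz action of the braid group `B_m` on sequences of `m`
transpositions of `S_n` (i.e. any right action whose generators act by the Hurwitz moves),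
and any homomorphism `*` of `B_m` sending each generator `σ_i` to `σ_i⁻¹`, the mind-body
dual satisfies `(ρ·β)* = ρ*·β*`. -/
theorem mbDual_hurwitz_equivariant {n m : ℕ}
    (act : (Fin m → Perm (Fin n)) → BraidGroup m → (Fin m → Perm (Fin n)))
    (hone : ∀ ρ, act ρ 1 = ρ)
    (hmul : ∀ ρ β γ, act ρ (β * γ) = act (act ρ β) γ)
    (hgen : ∀ ρ (i : Fin (m - 1)), act ρ (braidGen i) = hurwitzMove i ρ)
    (star : BraidGroup m →* BraidGroup m)
    (hstar : ∀ i : Fin (m - 1), star (braidGen i) = (braidGen i)⁻¹)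
    (ρ : Fin m → Perm (Fin n)) (hρ : ∀ i, (ρ i).IsSwap)
    (β : BraidGroup m) :
    mbDualF (act ρ β) = act (mbDualF ρ) (star β) := by
  -- inverse of a generator acts by the inverse Hurwitz move
  have act_inv_gen : ∀ (τ : Fin m → Perm (Fin n)) (i : Fin (m - 1)),
      act τ (braidGen i)⁻¹ = invMove i τ := by
    intro τ i
    have h1 : act (invMove i τ) (braidGen i) = τ := by
      rw [hgen, hurwitz_invMove]
    calc act τ (braidGen i)⁻¹
        = act (act (invMove i τ) (braidGen i)) (braidGen i)⁻¹ := by rw [h1]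
      _ = act (invMove i τ) (braidGen i * (braidGen i)⁻¹) := (hmul _ _ _).symm
      _ = invMove i τ := by rw [mul_inv_cancel, hone]
  -- the action preserves the property of being a sequence of swaps
  have hQ : ∀ β : BraidGroup m,
      (∀ τ, (∀ j, (τ j).IsSwap) → ∀ j, ((act τ β) j).IsSwap) ∧
      (∀ τ, (∀ j, (τ j).IsSwap) → ∀ j, ((act τ β⁻¹) j).IsSwap) := by
    intro β
    have hβ : β ∈ Subgroup.closure
        (Set.range (PresentedGroup.of : Fin (m - 1) → BraidGroup m)) := by
      rw [PresentedGroup.closure_range_of]; trivial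
    induction hβ using Subgroup.closure_induction with
    | mem x hx =>
      obtain ⟨i, rfl⟩ := hx
      have hof : (PresentedGroup.of i : BraidGroup m) = braidGen i := rfl
      constructor
      · intro τ hτ j
        rw [hof, hgen]
        unfold hurwitzMove
        split_ifs with h1 h2
        · exact isSwap_conj _ (hτ _)
        · exact hτ _
        · exact hτ _
      · intro τ hτ j
        rw [hof, act_inv_gen]
        unfold invMove
        split_ifs with h1 h2
        · exact hτ _
        · have := isSwap_conj (τ j)⁻¹ (hτ ⟨(i : ℕ), by have := i.isLt; omega⟩)
          rwa [inv_inv] at this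
        · exact hτ _
    | one =>
      constructor <;> intro τ hτ j <;> simp only [inv_one, hone] <;> exact hτ j
    | mul x y hx hy ihx ihy =>
      constructor
      · intro τ hτ j
        rw [hmul]
        exact ihy.1 _ (ihx.1 τ hτ) j
      · intro τ hτ j
        rw [mul_inv_rev, hmul]
        exact ihx.2 _ (ihy.2 τ hτ) j
    | inv x hx ihx =>
      refine ⟨ihx.2, ?_⟩
      intro τ hτ j
      rw [inv_inv]
      exact ihx.1 τ hτ j
  -- main induction
  have hP : ∀ β : BraidGroup m, ∀ τ : Fin m → Perm (Fin n), (∀ j, (τ j).IsSwap) →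
      mbDualF (act τ β) = act (mbDualF τ) (star β) := by
    intro β
    have hβ : β ∈ Subgroup.closure
        (Set.range (PresentedGroup.of : Fin (m - 1) → BraidGroup m)) := by
      rw [PresentedGroup.closure_range_of]; trivial
    induction hβ using Subgroup.closure_induction with
    | mem x hx =>
      obtain ⟨i, rfl⟩ := hx
      intro τ hτ
      have hof : (PresentedGroup.of i : BraidGroup m) = braidGen i := rfl
      rw [hof, hgen, hstar, act_inv_gen]
      refine mbDual_move i τ (fun j => ?_)
      obtain ⟨x, y, hxy, h⟩ := hτ j
      rw [h, swap_mul_self]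
    | one =>
      intro τ hτ
      rw [hone, map_one, hone]
    | mul x y hx hy ihx ihy =>
      intro τ hτ
      rw [hmul, map_mul, hmul, ← ihx τ hτ]
      exact ihy _ ((hQ x).1 τ hτ)
    | inv x hx ihx =>
      intro τ hτ
      have hτ' := (hQ x).2 τ hτ
      have hb : act (act τ x⁻¹) x = τ := by
        rw [← hmul, inv_mul_cancel, hone]
      have h := ihx (act τ x⁻¹) hτ'
      rw [hb] at h
      rw [map_inv, h, ← hmul, mul_inv_cancel, hone]
  exact hP β ρ hρ
end

section
/- If ρ = (τ_1,...,τ_m) is a factorization in S_n and Δ_m is the Garside element of the braid group B_m, then the Hurwitz action of Δ_m satisfies ρ·Δ_m = (τ_m^{τ_{m-1}···τ_1}, ..., τ_2^{τ_1}, τ_1); equivalently, ρ* equals the reverse of ρ·Δ_m. -/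
/-!
Under the Hurwitz action, `δ_{k+1,m} = σ_{m-1} ⋯ σ_{k+1}` carries the last entry of a sequence
to position `k`, conjugated by the product of the entries it passes. Applying
`δ_{1,m}, …, δ_{k,m}` in turn therefore puts the last `k` entries of `ρ`, each conjugated by the
product of all entries before it, in reverse order in front of the first `m - k` entries of `ρ`.
For `k = m - 1` this is `ρ·Δ_m = (τ_m^{(τ_1⋯τ_{m-1})⁻¹}, …, τ_2^{τ_1⁻¹}, τ_1)`, and since
transpositions are involutions, `(τ_1 ⋯ τ_{i-1})⁻¹ = τ_{i-1} ⋯ τ_1`.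
-/

open Equiv

structure IsHurwitzAction {n m : ℕ}
    (act : (Fin m → Perm (Fin n)) → BraidGroup m → (Fin m → Perm (Fin n))) : Prop where
  one : ∀ ρ, act ρ 1 = ρ
  mul : ∀ ρ β γ, act ρ (β * γ) = act (act ρ β) γ
  gen : ∀ ρ (i : Fin (m - 1)), act ρ (braidGen i) = hurwitzMove i ρ

section Braids

variable {m : ℕ}

lemma braidGen'_of_lt {k : ℕ} (hk : k < m - 1) : braidGen' m k = braidGen ⟨k, hk⟩ :=
  dif_pos hk

lemma braidDelta_of_le {i : ℕ} (hi : m ≤ i) : braidDelta m i m = 1 := by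
  simp [braidDelta, Nat.sub_eq_zero_of_le hi]

lemma braidDelta_succ {k : ℕ} (hk : k + 2 ≤ m) :
    braidDelta m (k + 1) m = braidDelta m (k + 2) m * braidGen' m k := by
  rw [braidDelta, show m - (k + 1) = m - (k + 2) + 1 by omega, List.range_succ,
    List.map_append, List.prod_append, List.map_singleton, List.prod_singleton, braidDelta]
  congr 2
  omega

variable (m) in
/-- `δ_{1,m} δ_{2,m} ⋯ δ_{k,m}`. -/
def garsidePrefix (k : ℕ) : BraidGroup m :=
  ((List.range k).map fun t => braidDelta m (1 + t) m).prod

lemma garsidePrefix_zero : garsidePrefix m 0 = 1 := rfl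

lemma garsidePrefix_succ (k : ℕ) :
    garsidePrefix m (k + 1) = garsidePrefix m k * braidDelta m (k + 1) m := by
  rw [garsidePrefix, List.range_succ, List.map_append, List.prod_append, List.map_singleton,
    List.prod_singleton, garsidePrefix, Nat.add_comm 1 k]

lemma garside_eq_garsidePrefix : garside m = garsidePrefix m (m - 1) := rfl

end Braids

section Sequences

variable {G : Type*} [Group G] {m : ℕ}

def prefixProd (ρ : Fin m → G) (i : ℕ) : G :=
  ((List.ofFn ρ).take i).prod

/-- `ρ k * ρ (k + 1) * ⋯ * ρ (m - 2)`. -/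
def segmentProd (ρ : Fin m → G) (k : ℕ) : G :=
  (((List.ofFn ρ).take (m - 1)).drop k).prod

/-- `τ_i` conjugated by `τ_1 ⋯ τ_{i-1}`, the conjugation that the Hurwitz action produces;
`mbDualF` conjugates by `(τ_{i-1} ⋯ τ_1)⁻¹` instead. -/
def hurwitzDual (ρ : Fin m → G) (i : Fin m) : G :=
  prefixProd ρ i * ρ i * (prefixProd ρ i)⁻¹

def moveLastTo (k : ℕ) (ρ : Fin m → G) : Fin m → G := fun j =>
  if (j : ℕ) < k then ρ j
  else if (j : ℕ) = k then
    segmentProd ρ k * ρ ⟨m - 1, by have := j.isLt; omega⟩ * (segmentProd ρ k)⁻¹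
  else ρ ⟨j - 1, by omega⟩

def reverseStage (k : ℕ) (ρ : Fin m → G) : Fin m → G := fun j =>
  if (j : ℕ) < k then hurwitzDual ρ j.rev else ρ ⟨j - k, by omega⟩

lemma prefixProd_zero (ρ : Fin m → G) : prefixProd ρ 0 = 1 := by
  simp [prefixProd]

lemma segmentProd_eq_mul {k : ℕ} (ρ : Fin m → G) (hk : k < m - 1) :
    segmentProd ρ k = ρ ⟨k, by omega⟩ * segmentProd ρ (k + 1) := by
  rw [segmentProd, List.drop_eq_getElem_cons (by simp; omega), List.prod_cons]
  simp [segmentProd]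

lemma segmentProd_self (ρ : Fin m → G) : segmentProd ρ (m - 1) = 1 := by
  simp [segmentProd]

lemma moveLastTo_self (ρ : Fin m → G) : moveLastTo (m - 1) ρ = ρ := by
  funext j
  simp only [moveLastTo, segmentProd_self, one_mul, inv_one, mul_one]
  split_ifs with hlt heq
  · rfl
  · exact congrArg ρ (Fin.ext heq.symm)
  · omega

lemma segmentProd_reverseStage (k : ℕ) (ρ : Fin m → G) :
    segmentProd (reverseStage k ρ) k = prefixProd ρ (m - 1 - k) := by
  rw [segmentProd, prefixProd]
  congr 1
  refine List.ext_getElem (by simp; omega) fun i h₁ h₂ => ?_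
  simp only [List.length_drop, List.length_take, List.length_ofFn] at h₁ h₂
  simp only [List.getElem_drop, List.getElem_take, List.getElem_ofFn, reverseStage,
    if_neg (show ¬ k + i < k by omega)]
  exact congrArg ρ (Fin.ext (by simp))

lemma moveLastTo_reverseStage {k : ℕ} (ρ : Fin m → G) (hk : k < m - 1) :
    moveLastTo k (reverseStage k ρ) = reverseStage (k + 1) ρ := by
  funext j
  simp only [moveLastTo, reverseStage, segmentProd_reverseStage k ρ]
  split_ifs <;> try omega
  · rfl
  · rw [show j.rev = ⟨m - 1 - k, by omega⟩ from Fin.ext (by simp; omega)]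
    rfl
  · exact congrArg ρ (Fin.ext (by simp; omega))

lemma reverseStage_last (ρ : Fin m → G) :
    reverseStage (m - 1) ρ = fun j => hurwitzDual ρ j.rev := by
  funext j
  simp only [reverseStage]
  split_ifs with hj
  · rfl
  · have hrev : j.rev = ⟨0, by omega⟩ := Fin.ext (by simp; omega)
    rw [hurwitzDual, hrev, prefixProd_zero, one_mul, inv_one, mul_one]
    exact congrArg ρ (Fin.ext (by simp only; omega))

end Sequences

lemma List.inv_prod_reverse_of_involutive {G : Type*} [Group G] {l : List G} (hl : ∀ x ∈ l, x⁻¹ = x) :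
    l.reverse.prod⁻¹ = l.prod := by
  rw [List.prod_inv_reverse, List.map_reverse, List.reverse_reverse, List.map_congr_left hl,
    List.map_id']

lemma mbDualF_eq_hurwitzDual {n m : ℕ} {ρ : Fin m → Perm (Fin n)} (hρ : ∀ i, (ρ i)⁻¹ = ρ i) :
    mbDualF ρ = hurwitzDual ρ := by
  funext i
  have hl : ∀ x ∈ (List.ofFn ρ).take i, x⁻¹ = x := fun x hx => by
    obtain ⟨t, rfl⟩ := List.mem_ofFn.mp (List.mem_of_mem_take hx)
    exact hρ t
  have h := List.inv_prod_reverse_of_involutive hl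
  rw [mbDualF, hurwitzDual, prefixProd, ← h, inv_inv]

section HurwitzAction

variable {n m : ℕ}

lemma hurwitzMove_moveLastTo {k : ℕ} (ρ : Fin m → Perm (Fin n)) (hk : k < m - 1) :
    hurwitzMove ⟨k, hk⟩ (moveLastTo (k + 1) ρ) = moveLastTo k ρ := by
  funext j
  simp only [hurwitzMove, moveLastTo]
  split_ifs <;> try omega
  · subst_vars
    rw [segmentProd_eq_mul ρ hk]
    simp only [Fin.eta, mul_assoc, mul_inv_rev]
  · exact congrArg ρ (Fin.ext (by simp; omega))
  · rfl
  · rfl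

variable {act : (Fin m → Perm (Fin n)) → BraidGroup m → (Fin m → Perm (Fin n))}

namespace IsHurwitzAction

lemma act_braidDelta (h : IsHurwitzAction act) (ρ : Fin m → Perm (Fin n)) {k : ℕ}
    (hk : k ≤ m - 1) : act ρ (braidDelta m (k + 1) m) = moveLastTo k ρ := by
  induction hk using Nat.decreasingInduction with
  | self => rw [braidDelta_of_le (by omega), h.one, moveLastTo_self]
  | of_succ k hk ih =>
    rw [braidDelta_succ (by omega), h.mul, ih, braidGen'_of_lt hk, h.gen, hurwitzMove_moveLastTo]

lemma act_garsidePrefix (h : IsHurwitzAction act) (ρ : Fin m → Perm (Fin n)) {k : ℕ}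
    (hk : k ≤ m - 1) : act ρ (garsidePrefix m k) = reverseStage k ρ := by
  induction k with
  | zero =>
    rw [garsidePrefix_zero, h.one]
    funext j
    simp [reverseStage]
  | succ k ih =>
    rw [garsidePrefix_succ, h.mul, ih (by omega), h.act_braidDelta _ (by omega),
      moveLastTo_reverseStage ρ (by omega)]

lemma act_garside (h : IsHurwitzAction act) (ρ : Fin m → Perm (Fin n)) :
    act ρ (garside m) = fun j => hurwitzDual ρ j.rev := by
  rw [garside_eq_garsidePrefix, h.act_garsidePrefix ρ le_rfl, reverseStage_last]

end IsHurwitzAction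

end HurwitzAction

/-- For any right Hurwitz action of `B_m` on sequences of `m` transpositions
of `S_n`, the action of the Garside element `Δ_m` satisfies
`ρ·Δ_m = (τ_m^{τ_{m-1}⋯τ_1}, ..., τ_2^{τ_1}, τ_1)`; equivalently, the mind-body dual `ρ*`
is the reverse of `ρ·Δ_m`. -/
theorem hurwitz_garside_eq_reverse_mbDual {n m : ℕ}
    (act : (Fin m → Perm (Fin n)) → BraidGroup m → (Fin m → Perm (Fin n)))
    (hone : ∀ ρ, act ρ 1 = ρ)
    (hmul : ∀ ρ β γ, act ρ (β * γ) = act (act ρ β) γ)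
    (hgen : ∀ ρ (i : Fin (m - 1)), act ρ (braidGen i) = hurwitzMove i ρ)
    (ρ : Fin m → Perm (Fin n)) (hρ : ∀ i, (ρ i).IsSwap) :
    act ρ (garside m) = (fun i : Fin m => mbDualF ρ i.rev) ∧
    mbDualF ρ = (fun i : Fin m => act ρ (garside m) i.rev) := by
  have hinv : ∀ i, (ρ i)⁻¹ = ρ i := fun i => by
    obtain ⟨a, b, -, hab⟩ := hρ i
    rw [hab, swap_inv]
  have hact := (IsHurwitzAction.mk hone hmul hgen).act_garside ρ
  rw [mbDualF_eq_hurwitzDual hinv, hact]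
  exact ⟨rfl, by simp only [Fin.rev_rev]⟩
end

section
/- The edges of a loopless graph with a local edge ordering can be recovered from its medial digraph: the underlying undirected graph of the medial digraph of a graph Γ with n vertices and m edges has m vertices and 2m - n edges, hence its Euler characteristic equals the Euler characteristic n - m of Γ. -/
/-- Let `Γ` be a loopless multigraph with vertex type `V` (`n` vertices),
edge type `E` (`m` edges) and endpoint map `ends`, equipped with a local edge ordering:
at each vertex `v` a linear order `ord v` of the edges incident to `v` (every vertex
being incident to at least one edge).  The medial digraph has the edges of `Γ` as
vertices, and one arc for each pair of consecutive edges in the local order at some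
vertex, i.e. its arc type is `Σ v : V, Fin ((ord v).length - 1)`.  Then the medial
digraph has `m` vertices and `2m - n` arcs, hence its underlying graph has Euler
characteristic `m - (2m - n) = n - m`, the Euler characteristic of `Γ`. -/
theorem medial_digraph_euler_char {V E : Type*} [Fintype V] [Fintype E]
    (ends : E → Sym2 V) (hloop : ∀ e, ¬ (ends e).IsDiag)
    (ord : V → List E)
    (hnodup : ∀ v, (ord v).Nodup)
    (hmem : ∀ v e, e ∈ ord v ↔ v ∈ ends e)
    (hdeg : ∀ v, ord v ≠ []) :
    Fintype.card V + Fintype.card (Σ v : V, Fin ((ord v).length - 1)) =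
      2 * Fintype.card E ∧
    (Fintype.card E : ℤ) - Fintype.card (Σ v : V, Fin ((ord v).length - 1)) =
      (Fintype.card V : ℤ) - Fintype.card E := by
  classical
  have hlen : ∀ v, 1 ≤ (ord v).length := fun v =>
    List.length_pos_iff.mpr (hdeg v)
  have hsum : ∑ v : V, (ord v).length = 2 * Fintype.card E := by
    have h1 : ∀ v : V, (ord v).length =
        (Finset.univ.filter (fun e : E => e ∈ ord v)).card := by
      intro v
      rw [← List.toFinset_card_of_nodup (hnodup v)]
      congr 1
      ext e
      simp
    calc ∑ v : V, (ord v).length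
        = ∑ v : V, ∑ e : E, (if e ∈ ord v then 1 else 0) := by
          simp [h1, Finset.sum_boole]
      _ = ∑ e : E, ∑ v : V, (if e ∈ ord v then 1 else 0) := Finset.sum_comm
      _ = ∑ e : E, (Finset.univ.filter (fun v : V => v ∈ ends e)).card := by
          apply Finset.sum_congr rfl
          intro e _
          simp [hmem, Finset.sum_boole]
      _ = ∑ e : E, 2 := by
          apply Finset.sum_congr rfl
          intro e _
          obtain ⟨⟨a, b⟩, he⟩ := Quot.exists_rep (ends e)
          have he' : ends e = s(a, b) := he.symm
          have hab : a ≠ b := fun h => hloop e (he' ▸ Sym2.mk_isDiag_iff.mpr h)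
          rw [he']
          have heq : (Finset.univ.filter (fun v : V => v ∈ s(a, b))) = {a, b} := by
            ext v; simp [Sym2.mem_iff]
          rw [heq, Finset.card_insert_of_notMem (by simp [hab]), Finset.card_singleton]
      _ = 2 * Fintype.card E := by
          simp [Finset.sum_const, mul_comm]
  have hcard : Fintype.card (Σ v : V, Fin ((ord v).length - 1)) =
      ∑ v : V, ((ord v).length - 1) := by
    simp [Fintype.card_sigma]
  have hsum2 : ∑ v : V, ((ord v).length - 1) + Fintype.card V = ∑ v : V, (ord v).length := by
    rw [Fintype.card_eq_sum_ones, ← Finset.sum_add_distrib]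
    apply Finset.sum_congr rfl
    intro v _
    have := hlen v
    omega
  refine ⟨by omega, by omega⟩
end

section
/- The edge-labeled graph associated with a factorization ρ of length n-1 in S_{n} is a tree if and only if the total monodromy μ(ρ) is an n-cycle. -/
/-!
Each transposition of the factorization moves every point inside its connected component of the
graph, hence so does the product `μ`; if `μ` is transitive the graph is connected, and a connected
graph on `n` vertices with at most `n - 1` edges is a tree.

Conversely, if the graph is a tree, its `n - 1` transpositions are distinct and each of them, added
in turn, joins two different components of the graph of its predecessors. By induction these
components are exactly the cycles of the partial product, so multiplying by the new transposition
merges two cycles into one, and in the end `μ` has a single cycle.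
-/

def factGraph {n m : ℕ} (ρ : Fin m → Equiv.Perm (Fin n)) : SimpleGraph (Fin n) where
  Adj a b := a ≠ b ∧ ∃ i, ρ i = Equiv.swap a b
  symm := by
    constructor; rintro a b ⟨hab, i, hi⟩
    exact ⟨hab.symm, i, by rw [hi, Equiv.swap_comm]⟩
  loopless := by constructor; rintro a ⟨h, -⟩; exact h rfl

open Equiv Equiv.Perm SimpleGraph

namespace Equiv.Perm

variable {α : Type*}

theorem SameCycle.of_forall_sameCycle_apply {σ τ : Perm α} (h : ∀ z, τ.SameCycle z (σ z))
    {a b : α} (hab : σ.SameCycle a b) : τ.SameCycle a b := by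
  have step : ∀ j : ℤ, τ.SameCycle ((σ ^ j) a) ((σ ^ (j + 1)) a) := fun j => by
    rw [add_comm, zpow_add, zpow_one, mul_apply]
    exact h _
  obtain ⟨i, rfl⟩ := hab
  induction i using Int.induction_on with
  | zero => exact SameCycle.refl τ a
  | succ i ih => exact ih.trans (step i)
  | pred i ih => exact ih.trans (by simpa using (step (-i - 1)).symm)

variable [DecidableEq α]

theorem swap_eq_swap_iff {a b x y : α} (hab : a ≠ b) :
    swap a b = swap x y ↔ a = x ∧ b = y ∨ a = y ∧ b = x := by
  refine ⟨fun h => ?_, ?_⟩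
  · have ha : swap x y a = b := by rw [← h, swap_apply_left]
    have hb : swap x y b = a := by rw [← h, swap_apply_right]
    rw [swap_apply_def] at ha hb
    grind
  · rintro (⟨rfl, rfl⟩ | ⟨rfl, rfl⟩)
    · rfl
    · exact swap_comm a b

/-- `σ * swap x y` sends `x` to `σ y` and agrees with `σ` on the rest of the `σ`-cycle of `y`
(which avoids `x`) except at `y` itself, so its orbit of `x` runs through that cycle up to `y`. -/
theorem sameCycle_mul_swap_of_not_sameCycle [Finite α] {σ : Perm α} {x y : α}
    (h : ¬σ.SameCycle x y) : (σ * swap x y).SameCycle x y := by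
  set τ := σ * swap x y
  have step : ∀ k : ℕ, τ.SameCycle x y ∨ τ.SameCycle x ((σ ^ (k + 1)) y) := by
    intro k
    induction k with
    | zero => exact Or.inr ⟨1, by simp [τ]⟩
    | succ k ih =>
      refine ih.elim Or.inl fun hz => ?_
      set z := (σ ^ (k + 1)) y
      by_cases hzy : z = y
      · exact Or.inl (hzy ▸ hz)
      have hyz : σ.SameCycle y z := sameCycle_pow_right.2 (SameCycle.refl σ y)
      have hzx : z ≠ x := fun hzx => h (hzx ▸ hyz).symm
      refine Or.inr (hz.trans ⟨1, ?_⟩)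
      rw [zpow_one, mul_apply, swap_apply_of_ne_of_ne hzx hzy, pow_succ' σ (k + 1), mul_apply]
  simpa [← pow_succ, Nat.sub_add_cancel (orderOf_pos σ), pow_orderOf_eq_one, or_self]
    using step (orderOf σ - 1)

theorem SameCycle.mul_swap_of_not_sameCycle [Finite α] {σ : Perm α} {x y a b : α}
    (hxy : ¬σ.SameCycle x y) (hab : σ.SameCycle a b) : (σ * swap x y).SameCycle a b := by
  have hmerge := sameCycle_mul_swap_of_not_sameCycle hxy
  have happly (w : α) : (σ * swap x y).SameCycle w ((σ * swap x y) w) :=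
    sameCycle_apply_right.2 (SameCycle.refl _ w)
  refine hab.of_forall_sameCycle_apply fun z => ?_
  rcases eq_or_ne z x with rfl | hzx
  · simpa using hmerge.trans (happly y)
  rcases eq_or_ne z y with rfl | hzy
  · simpa using hmerge.symm.trans (happly x)
  · simpa [swap_apply_of_ne_of_ne hzx hzy] using happly z

end Equiv.Perm

namespace SimpleGraph
variable {V : Type*} (G : SimpleGraph V)

def componentPreserving : Subgroup (Perm V) where
  carrier := {σ | ∀ a, G.Reachable a (σ a)}
  one_mem' a := Reachable.refl a
  mul_mem' hσ hτ a := (hτ a).trans (hσ _)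
  inv_mem' {σ} hσ a := by simpa using (hσ (σ⁻¹ a)).symm

variable {G}

theorem swap_mem_componentPreserving [DecidableEq V] {x y : V} (h : G.Adj x y) :
    swap x y ∈ G.componentPreserving := fun a => by
  rcases eq_or_ne a x with rfl | hax
  · simpa using h.reachable
  rcases eq_or_ne a y with rfl | hay
  · simpa using h.reachable.symm
  · simp [swap_apply_of_ne_of_ne hax hay]

theorem reachable_of_sameCycle {σ : Perm V} (hσ : σ ∈ G.componentPreserving) {a b : V}
    (h : σ.SameCycle a b) : G.Reachable a b := by
  obtain ⟨i, rfl⟩ := h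
  exact zpow_mem hσ i a

theorem Reachable.rel_of_forall_adj {r : V → V → Prop} (hrefl : ∀ u, r u u)
    (htrans : ∀ {u v w}, r u v → r v w → r u w) (h : ∀ u v, G.Adj u v → r u v) {a b : V}
    (hab : G.Reachable a b) : r a b := by
  rw [reachable_iff_reflTransGen] at hab
  induction hab with
  | refl => exact hrefl a
  | tail _ huv ih => exact htrans ih (h _ _ huv)

theorem Connected.isTree_of_card_edgeSet_le [Finite V] (hG : G.Connected)
    (h : Nat.card G.edgeSet + 1 ≤ Nat.card V) : G.IsTree :=
  isTree_iff_connected_and_card.2 ⟨hG, le_antisymm h hG.card_vert_le_card_edgeSet_add_one⟩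

end SimpleGraph

section factGraph

variable {n m : ℕ}

@[simp]
theorem factGraph_adj {ρ : Fin m → Perm (Fin n)} {a b : Fin n} :
    (factGraph ρ).Adj a b ↔ a ≠ b ∧ ∃ i, ρ i = swap a b := Iff.rfl

theorem prod_ofFn_mem_componentPreserving {ρ : Fin m → Perm (Fin n)}
    (hρ : ∀ i, (ρ i).IsSwap) :
    (List.ofFn ρ).prod ∈ (factGraph ρ).componentPreserving := by
  refine list_prod_mem fun τ hτ => ?_
  obtain ⟨i, rfl⟩ := List.mem_ofFn.1 hτ
  obtain ⟨x, y, hxy, hi⟩ := hρ i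
  exact hi ▸ swap_mem_componentPreserving ⟨hxy, i, hi⟩

theorem factGraph_eq_factGraph_init_sup_edge {ρ : Fin (m + 1) → Perm (Fin n)} {x y : Fin n}
    (h : ρ (Fin.last m) = swap x y) : factGraph ρ = factGraph (Fin.init ρ) ⊔ edge x y := by
  ext a b
  simp only [factGraph_adj, sup_adj, edge_adj, Fin.exists_fin_succ', Fin.init, h]
  constructor
  · rintro ⟨hab, hi | hlast⟩
    · exact Or.inl ⟨hab, hi⟩
    · exact Or.inr ⟨(swap_eq_swap_iff hab).1 hlast.symm, hab⟩
  · rintro (⟨hab, hi⟩ | ⟨hxy, hab⟩)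
    · exact ⟨hab, Or.inl hi⟩
    · exact ⟨hab, Or.inr ((swap_eq_swap_iff hab).2 hxy).symm⟩

theorem sameCycle_prod_ofFn_of_isAcyclic {ρ : Fin m → Perm (Fin n)} (hρ : ∀ i, (ρ i).IsSwap)
    (hinj : Function.Injective ρ) (hacyc : (factGraph ρ).IsAcyclic) {a b : Fin n}
    (hab : (factGraph ρ).Reachable a b) : (List.ofFn ρ).prod.SameCycle a b := by
  induction m generalizing a b with
  | zero =>
    refine hab.rel_of_forall_adj (SameCycle.refl _) SameCycle.trans fun u v huv => ?_
    exact huv.2.choose.elim0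
  | succ m ih =>
    obtain ⟨x, y, hxy, hlast⟩ := hρ (Fin.last m)
    set σ := (List.ofFn (Fin.init ρ)).prod
    have hprod : (List.ofFn ρ).prod = σ * swap x y := by
      rw [List.ofFn_succ', List.prod_concat, hlast]
      rfl
    have hG := factGraph_eq_factGraph_init_sup_edge hlast
    rw [hG, isAcyclic_sup_fromEdgeSet_iff] at hacyc
    have hIH : ∀ {u v}, (factGraph (Fin.init ρ)).Reachable u v → σ.SameCycle u v :=
      ih (fun i => hρ _) (hinj.comp (Fin.castSucc_injective m)) hacyc.1
    have hnot_adj : ¬(factGraph (Fin.init ρ)).Adj x y := fun ⟨_, i, hi⟩ =>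
      (Fin.castSucc_lt_last i).ne (hinj (hi.trans hlast.symm))
    have hnot_reachable : ¬(factGraph (Fin.init ρ)).Reachable x y := fun h =>
      (hacyc.2 h).elim hxy hnot_adj
    have hnot_sameCycle : ¬σ.SameCycle x y := fun h =>
      hnot_reachable (reachable_of_sameCycle (prod_ofFn_mem_componentPreserving fun i => hρ _) h)
    rw [hprod]
    rw [hG] at hab
    refine hab.rel_of_forall_adj (SameCycle.refl _) SameCycle.trans fun u v huv => ?_
    rcases huv with huv | huv
    · exact (hIH huv.reachable).mul_swap_of_not_sameCycle hnot_sameCycle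
    · obtain ⟨⟨rfl, rfl⟩ | ⟨rfl, rfl⟩, -⟩ := (edge_adj ..).1 huv
      · exact sameCycle_mul_swap_of_not_sameCycle hnot_sameCycle
      · exact (sameCycle_mul_swap_of_not_sameCycle hnot_sameCycle).symm

theorem card_edgeSet_factGraph_le (ρ : Fin m → Perm (Fin n)) :
    Nat.card (factGraph ρ).edgeSet ≤ Nat.card (Set.range ρ) := by
  have hmaps :
      Set.MapsTo (Sym2.lift ⟨swap, swap_comm⟩) (factGraph ρ).edgeSet (Set.range ρ) := by
    intro e he
    induction e using Sym2.ind
    exact he.2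
  refine Nat.card_le_card_of_injective _ (hmaps.restrict_inj.2 fun e he e' he' hee' => ?_)
  induction e using Sym2.ind
  induction e' using Sym2.ind
  simpa [Sym2.eq_iff] using (swap_eq_swap_iff he.1).1 hee'

theorem injective_of_le_card_edgeSet_factGraph {ρ : Fin m → Perm (Fin n)}
    (h : m ≤ Nat.card (factGraph ρ).edgeSet) : Function.Injective ρ := by
  have hbij := Set.rangeFactorization_surjective.bijective_of_nat_card_le
    (by rw [Nat.card_fin]; exact h.trans (card_edgeSet_factGraph_le ρ))
  exact fun i j hij => hbij.1 (Subtype.ext hij)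

end factGraph

/-- The graph associated with a factorization `ρ` of length `n - 1` in
`S_n` is a tree if and only if the total monodromy `μ(ρ) = τ_1 ⋯ τ_n-1` is an `n`-cycle
(i.e. the cyclic group it generates acts transitively on the `n` points). -/
theorem factGraph_isTree_iff_cycle {n : ℕ} (hn : 0 < n)
    (ρ : Fin (n - 1) → Equiv.Perm (Fin n)) (hρ : ∀ i, (ρ i).IsSwap) :
    (factGraph ρ).IsTree ↔
      ∀ a b : Fin n, ∃ k : ℕ, ((List.ofFn ρ).prod ^ k) a = b := by
  constructor
  · intro hT a b
    have hcard := (isTree_iff_connected_and_card.1 hT).2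
    rw [Nat.card_fin] at hcard
    have hinj := injective_of_le_card_edgeSet_factGraph (ρ := ρ) (by omega)
    obtain ⟨k, -, hk⟩ :=
      (sameCycle_prod_ofFn_of_isAcyclic hρ hinj hT.isAcyclic (hT.connected a b)).exists_pow_eq'
    exact ⟨k, hk⟩
  · intro h
    have hedges : Nat.card (factGraph ρ).edgeSet ≤ n - 1 :=
      (card_edgeSet_factGraph_le ρ).trans ((Finite.card_range_le ρ).trans_eq (Nat.card_fin _))
    have hconn : (factGraph ρ).Connected := by
      refine (connected_iff _).2 ⟨fun a b => ?_, ⟨⟨0, hn⟩⟩⟩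
      obtain ⟨k, rfl⟩ := h a b
      exact reachable_of_sameCycle (prod_ofFn_mem_componentPreserving hρ)
        (sameCycle_pow_right.2 (SameCycle.refl _ a))
    exact hconn.isTree_of_card_edgeSet_le (by rw [Nat.card_fin]; omega)
end
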